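/- For all finite hypergraphs H and H' and all vertices x,y ∈ V(H), a,b ∈ V(H'), the distance in the normal product satisfies d_{H⊠̌H'}((x,a),(y,b)) = max{ d_H(x,y), d_{H'}(a,b) } (in ℕ∞). -/

import Mathlib

/-!
Basic definitions: finite hypergraphs (a finite nonempty vertex set `V`, given by
`[Fintype V] [Nonempty V]`, together with a set of nonempty edges), walks, distance,
connectedness, simplicity, rank, colorings, Helly property, covers,
the various hypergraph products, 2-sections, and graph products.
-/

/-- A hypergraph on a vertex type `V`: a collection of nonempty edges (finite subsets of `V`). -/
structure FinHypergraph (V : Type*) where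
  edges : Set (Finset V)
  nonempty_edges : ∀ e ∈ edges, e.Nonempty

namespace FinHypergraph

variable {V V₁ V₂ : Type*}

/-- There is a walk of length `n` from `u` to `v`: a sequence of vertices `w 0, …, w n`
and edges `f 1, …, f n` with consecutive vertices distinct and both contained
in the corresponding edge. -/
def HasWalk (H : FinHypergraph V) (u v : V) (n : ℕ) : Prop :=
  ∃ (w : Fin (n + 1) → V) (f : Fin n → Finset V),
    w 0 = u ∧ w (Fin.last n) = v ∧
      ∀ i : Fin n, f i ∈ H.edges ∧ w i.castSucc ≠ w i.succ ∧
        w i.castSucc ∈ f i ∧ w i.succ ∈ f i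

/-- The distance between two vertices: the minimum length of a walk joining them,
`⊤ = ∞` if there is none. -/
noncomputable def dist (H : FinHypergraph V) (u v : V) : ℕ∞ :=
  sInf {x : ℕ∞ | ∃ n : ℕ, x = n ∧ H.HasWalk u v n}

/-- A hypergraph is connected if any two vertices are joined by a walk. -/
def Connected (H : FinHypergraph V) : Prop := ∀ u v : V, ∃ n, H.HasWalk u v n

/-- A hypergraph is simple if every edge has at least two vertices and
no edge is contained in another edge. -/
def Simple (H : FinHypergraph V) : Prop :=
  (∀ e ∈ H.edges, 2 ≤ e.card) ∧ ∀ e ∈ H.edges, ∀ f ∈ H.edges, e ⊆ f → e = f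

/-- A hypergraph is loopless if every edge has at least two vertices. -/
def Loopless (H : FinHypergraph V) : Prop := ∀ e ∈ H.edges, 2 ≤ e.card

/-- The rank: the maximum cardinality of an edge. -/
noncomputable def rank (H : FinHypergraph V) : ℕ := sSup (Finset.card '' H.edges)

/-- The anti-rank: the minimum cardinality of an edge. -/
noncomputable def antirank (H : FinHypergraph V) : ℕ := sInf (Finset.card '' H.edges)

/-- A proper coloring: no color class contains an edge. -/
def IsProperColoring (H : FinHypergraph V) {k : ℕ} (c : V → Fin k) : Prop :=
  ∀ e ∈ H.edges, ∀ i : Fin k, ¬ ∀ v ∈ e, c v = i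

/-- A proper strong coloring: a proper coloring in which the vertices of every
edge receive pairwise distinct colors. -/
def IsStrongColoring (H : FinHypergraph V) {k : ℕ} (c : V → Fin k) : Prop :=
  H.IsProperColoring c ∧ ∀ e ∈ H.edges, ∀ u ∈ e, ∀ v ∈ e, u ≠ v → c u ≠ c v

/-- The chromatic number: the least `k` admitting a proper `k`-coloring. -/
noncomputable def chromaticNumber (H : FinHypergraph V) : ℕ :=
  sInf {k : ℕ | ∃ c : V → Fin k, H.IsProperColoring c}

/-- The strong chromatic number: the least `k` admitting a proper strong `k`-coloring. -/
noncomputable def strongChromaticNumber (H : FinHypergraph V) : ℕ :=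
  sInf {k : ℕ | ∃ c : V → Fin k, H.IsStrongColoring c}

/-- The Helly property: every intersecting family of edges is a star. -/
def Helly (H : FinHypergraph V) : Prop :=
  ∀ E' ⊆ H.edges, (∀ e ∈ E', ∀ f ∈ E', ∃ x, x ∈ e ∧ x ∈ f) → ∃ v, ∀ e ∈ E', v ∈ e

/-- The covering number: the minimum cardinality of a set of vertices meeting every edge. -/
noncomputable def coverNumber (H : FinHypergraph V) : ℕ :=
  sInf {k : ℕ | ∃ T : Finset V, T.card = k ∧ ∀ e ∈ H.edges, ∃ v ∈ T, v ∈ e}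

/-- The Cartesian product of hypergraphs. -/
def cartProd (H₁ : FinHypergraph V₁) (H₂ : FinHypergraph V₂) : FinHypergraph (V₁ × V₂) where
  edges := {E | (∃ x, ∃ f ∈ H₂.edges, E = {x} ×ˢ f) ∨ ∃ e ∈ H₁.edges, ∃ y, E = e ×ˢ {y}}
  nonempty_edges := by
    rintro E (⟨x, f, hf, rfl⟩ | ⟨e, he, y, rfl⟩)
    · exact (Finset.singleton_nonempty x).product (H₂.nonempty_edges f hf)
    · exact (H₁.nonempty_edges e he).product (Finset.singleton_nonempty y)

section Products

variable [DecidableEq V₁] [DecidableEq V₂]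

/-- The minimal-rank-preserving direct product `H₁ ×̌ H₂`. -/
def minDirProd (H₁ : FinHypergraph V₁) (H₂ : FinHypergraph V₂) : FinHypergraph (V₁ × V₂) where
  edges := {E | ∃ e₁ ∈ H₁.edges, ∃ e₂ ∈ H₂.edges,
    E ⊆ e₁ ×ˢ e₂ ∧ E.card = min e₁.card e₂.card ∧
      (E.image Prod.fst).card = min e₁.card e₂.card ∧
      (E.image Prod.snd).card = min e₁.card e₂.card}
  nonempty_edges := by
    rintro E ⟨e₁, h₁, e₂, h₂, -, hc, -, -⟩
    rw [← Finset.card_pos, hc]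
    exact lt_min (Finset.card_pos.mpr (H₁.nonempty_edges e₁ h₁))
      (Finset.card_pos.mpr (H₂.nonempty_edges e₂ h₂))

/-- The maximal-rank-preserving direct product `H₁ ×̂ H₂`. -/
def maxDirProd (H₁ : FinHypergraph V₁) (H₂ : FinHypergraph V₂) : FinHypergraph (V₁ × V₂) where
  edges := {E | ∃ e₁ ∈ H₁.edges, ∃ e₂ ∈ H₂.edges,
    E ⊆ e₁ ×ˢ e₂ ∧ E.card = max e₁.card e₂.card ∧
      E.image Prod.fst = e₁ ∧ E.image Prod.snd = e₂}
  nonempty_edges := by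
    rintro E ⟨e₁, h₁, e₂, h₂, -, hc, -, -⟩
    rw [← Finset.card_pos, hc]
    exact lt_max_iff.mpr (Or.inl (Finset.card_pos.mpr (H₁.nonempty_edges e₁ h₁)))

/-- The non-rank-preserving direct product `H₁ ×̃ H₂`. -/
def nrDirProd (H₁ : FinHypergraph V₁) (H₂ : FinHypergraph V₂) : FinHypergraph (V₁ × V₂) where
  edges := {E | ∃ e ∈ H₁.edges, ∃ f ∈ H₂.edges, ∃ x ∈ e, ∃ y ∈ f,
    E = insert (x, y) ((e.erase x) ×ˢ (f.erase y))}
  nonempty_edges := by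
    rintro E ⟨e, -, f, -, x, -, y, -, rfl⟩
    exact Finset.insert_nonempty _ _

/-- The normal product `H₁ ⊠̌ H₂`: union of the Cartesian product edges and the
minimal-rank-preserving direct product edges. -/
def normalProd (H₁ : FinHypergraph V₁) (H₂ : FinHypergraph V₂) : FinHypergraph (V₁ × V₂) where
  edges := (H₁.cartProd H₂).edges ∪ (H₁.minDirProd H₂).edges
  nonempty_edges := by
    rintro E (h | h)
    · exact (H₁.cartProd H₂).nonempty_edges E h
    · exact (H₁.minDirProd H₂).nonempty_edges E h

/-- The strong product `H₁ ⊠̂ H₂`: union of the Cartesian product edges and the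
maximal-rank-preserving direct product edges. -/
def strongProd (H₁ : FinHypergraph V₁) (H₂ : FinHypergraph V₂) : FinHypergraph (V₁ × V₂) where
  edges := (H₁.cartProd H₂).edges ∪ (H₁.maxDirProd H₂).edges
  nonempty_edges := by
    rintro E (h | h)
    · exact (H₁.cartProd H₂).nonempty_edges E h
    · exact (H₁.maxDirProd H₂).nonempty_edges E h

/-- The lexicographic product `H₁ ∘ H₂`. -/
def lexProd (H₁ : FinHypergraph V₁) (H₂ : FinHypergraph V₂) : FinHypergraph (V₁ × V₂) where
  edges := {E | (E.image Prod.fst ∈ H₁.edges ∧ (E.image Prod.fst).card = E.card) ∨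
    ∃ x, ∃ e₂ ∈ H₂.edges, E = {x} ×ˢ e₂}
  nonempty_edges := by
    rintro E (⟨h₁, hc⟩ | ⟨x, e₂, h₂, rfl⟩)
    · rw [← Finset.card_pos, ← hc]
      exact Finset.card_pos.mpr (H₁.nonempty_edges _ h₁)
    · exact (Finset.singleton_nonempty x).product (H₂.nonempty_edges e₂ h₂)

end Products

/-- The square product `H₁ ■ H₂`. -/
def squareProd (H₁ : FinHypergraph V₁) (H₂ : FinHypergraph V₂) : FinHypergraph (V₁ × V₂) where
  edges := {E | ∃ e₁ ∈ H₁.edges, ∃ e₂ ∈ H₂.edges, E = e₁ ×ˢ e₂}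
  nonempty_edges := by
    rintro E ⟨e₁, h₁, e₂, h₂, rfl⟩
    exact (H₁.nonempty_edges e₁ h₁).product (H₂.nonempty_edges e₂ h₂)

/-- The 2-section of a hypergraph: distinct vertices are adjacent iff they lie
in a common edge. -/
def twoSection (H : FinHypergraph V) : SimpleGraph V where
  Adj x y := x ≠ y ∧ ∃ e ∈ H.edges, x ∈ e ∧ y ∈ e
  symm := by refine ⟨?_⟩; rintro x y ⟨hxy, e, he, hx, hy⟩; exact ⟨hxy.symm, e, he, hy, hx⟩
  loopless := by refine ⟨?_⟩; rintro x ⟨hx, -⟩; exact hx rfl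

end FinHypergraph

namespace SimpleGraph

variable {V₁ V₂ : Type*}

/-- The direct (tensor) product of simple graphs. -/
def directProd (G₁ : SimpleGraph V₁) (G₂ : SimpleGraph V₂) : SimpleGraph (V₁ × V₂) where
  Adj x y := G₁.Adj x.1 y.1 ∧ G₂.Adj x.2 y.2
  symm := ⟨fun _ _ ⟨h₁, h₂⟩ => ⟨h₁.symm, h₂.symm⟩⟩
  loopless := ⟨fun x h => G₁.loopless.irrefl x.1 h.1⟩

/-- The strong product of simple graphs. -/
def strongGraphProd (G₁ : SimpleGraph V₁) (G₂ : SimpleGraph V₂) : SimpleGraph (V₁ × V₂) where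
  Adj x y := x ≠ y ∧ ((x.1 = y.1 ∧ G₂.Adj x.2 y.2) ∨ (x.2 = y.2 ∧ G₁.Adj x.1 y.1) ∨
    (G₁.Adj x.1 y.1 ∧ G₂.Adj x.2 y.2))
  symm := by
    refine ⟨?_⟩
    rintro x y ⟨hne, (⟨h, h'⟩ | ⟨h, h'⟩ | ⟨h, h'⟩)⟩
    · exact ⟨hne.symm, Or.inl ⟨h.symm, h'.symm⟩⟩
    · exact ⟨hne.symm, Or.inr (Or.inl ⟨h.symm, h'.symm⟩)⟩
    · exact ⟨hne.symm, Or.inr (Or.inr ⟨h.symm, h'.symm⟩)⟩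
  loopless := by refine ⟨?_⟩; rintro x ⟨hx, -⟩; exact hx rfl

/-- The lexicographic product of simple graphs. -/
def lexGraphProd (G₁ : SimpleGraph V₁) (G₂ : SimpleGraph V₂) : SimpleGraph (V₁ × V₂) where
  Adj x y := G₁.Adj x.1 y.1 ∨ (x.1 = y.1 ∧ G₂.Adj x.2 y.2)
  symm := by
    refine ⟨?_⟩
    rintro x y (h | ⟨h, h'⟩)
    · exact Or.inl h.symm
    · exact Or.inr ⟨h.symm, h'.symm⟩
  loopless := by
    refine ⟨?_⟩
    rintro x (h | ⟨-, h⟩)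
    · exact G₁.loopless.irrefl x.1 h
    · exact G₂.loopless.irrefl x.2 h

end SimpleGraph

/-!
Distances in a hypergraph only see its 2-section, and the 2-section of `H₁ ⊠̌ H₂` is the strong
product of the 2-sections. The only nontrivial inclusion: if `x ≠ y` lie in an edge `e₁` and
`a ≠ b` in an edge `e₂`, the matching `{(x, a), (y, b)}` extends greedily inside `e₁ ×ˢ e₂` to a
`×̌`-edge of size `min |e₁| |e₂|`. In a strong product every step moves each coordinate by at most
one edge, and two walks can be run in parallel, the longer one finishing with Cartesian steps;
so the distance is the maximum of the coordinate distances.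
-/

namespace SimpleGraph

variable {V₁ V₂ W₁ W₂ : Type*} {G₁ : SimpleGraph V₁} {G₂ : SimpleGraph V₂}

theorem edist_le_edist_of_adj {G : SimpleGraph W₁} {G' : SimpleGraph W₂} {f : W₁ → W₂}
    (hf : ∀ ⦃p q⦄, G.Adj p q → G'.edist (f p) (f q) ≤ 1) (u v : W₁) :
    G'.edist (f u) (f v) ≤ G.edist u v := by
  refine le_iInf fun w => ?_
  induction w with
  | nil => simp
  | @cons p q r h w ih =>
    calc G'.edist (f p) (f r) ≤ G'.edist (f p) (f q) + G'.edist (f q) (f r) :=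
          SimpleGraph.edist_triangle
      _ ≤ 1 + w.length := add_le_add (hf h) ih
      _ = (w.cons h).length := by rw [Walk.length_cons, Nat.cast_succ, add_comm]

theorem edist_fst_le_one_of_strongGraphProd_adj {p q : V₁ × V₂}
    (h : (G₁.strongGraphProd G₂).Adj p q) : G₁.edist p.1 q.1 ≤ 1 := by
  rw [edist_le_one_iff_adj_or_eq]
  obtain ⟨-, ⟨h₁, -⟩ | ⟨-, h₁⟩ | ⟨h₁, -⟩⟩ := h <;> tauto

theorem edist_snd_le_one_of_strongGraphProd_adj {p q : V₁ × V₂}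
    (h : (G₁.strongGraphProd G₂).Adj p q) : G₂.edist p.2 q.2 ≤ 1 := by
  rw [edist_le_one_iff_adj_or_eq]
  obtain ⟨-, ⟨-, h₂⟩ | ⟨h₂, -⟩ | ⟨-, h₂⟩⟩ := h <;> tauto

variable (G₁ G₂)

def strongGraphProdLeft (b : V₂) : G₁ →g G₁.strongGraphProd G₂ where
  toFun a := (a, b)
  map_rel' h := ⟨fun hab => h.ne (congrArg Prod.fst hab), Or.inr (Or.inl ⟨rfl, h⟩)⟩

def strongGraphProdRight (a : V₁) : G₂ →g G₁.strongGraphProd G₂ where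
  toFun b := (a, b)
  map_rel' h := ⟨fun hab => h.ne (congrArg Prod.snd hab), Or.inl ⟨rfl, h⟩⟩

variable {G₁ G₂}

theorem exists_strongGraphProd_walk_length_eq_max {x y : V₁} {a b : V₂}
    (p : G₁.Walk x y) (q : G₂.Walk a b) :
    ∃ w : (G₁.strongGraphProd G₂).Walk (x, a) (y, b), w.length = max p.length q.length := by
  induction p generalizing a with
  | nil => exact ⟨q.map (strongGraphProdRight G₁ G₂ _), (Walk.length_map _ _).trans (by simp)⟩
  | @cons x x' y h p ih =>
    cases q with
    | nil =>
      exact ⟨(p.cons h).map (strongGraphProdLeft G₁ G₂ _), (Walk.length_map _ _).trans (by simp)⟩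
    | @cons a a' b h' q =>
      obtain ⟨w, hw⟩ := ih q
      have hdiag : (G₁.strongGraphProd G₂).Adj (x, a) (x', a') :=
        ⟨fun hxa => h.ne (congrArg Prod.fst hxa), Or.inr (Or.inr ⟨h, h'⟩)⟩
      exact ⟨w.cons hdiag, by simp [hw, Nat.succ_max_succ]⟩

theorem edist_strongGraphProd (x y : V₁) (a b : V₂) :
    (G₁.strongGraphProd G₂).edist (x, a) (y, b) = max (G₁.edist x y) (G₂.edist a b) := by
  refine le_antisymm ?_ (max_le ?_ ?_)
  · rcases eq_or_ne (G₁.edist x y) ⊤ with h₁ | h₁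
    · simp [h₁]
    rcases eq_or_ne (G₂.edist a b) ⊤ with h₂ | h₂
    · simp [h₂]
    obtain ⟨p, hp⟩ := exists_walk_of_edist_ne_top h₁
    obtain ⟨q, hq⟩ := exists_walk_of_edist_ne_top h₂
    obtain ⟨w, hw⟩ := exists_strongGraphProd_walk_length_eq_max p q
    calc (G₁.strongGraphProd G₂).edist (x, a) (y, b) ≤ w.length := edist_le w
      _ = max (G₁.edist x y) (G₂.edist a b) := by rw [hw, Nat.mono_cast.map_max, hp, hq]
  · exact edist_le_edist_of_adj (f := Prod.fst)
      (fun _ _ => edist_fst_le_one_of_strongGraphProd_adj) _ _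
  · exact edist_le_edist_of_adj (f := Prod.snd)
      (fun _ _ => edist_snd_le_one_of_strongGraphProd_adj) _ _

end SimpleGraph

namespace Finset

variable {α β : Type*} [DecidableEq α] [DecidableEq β]

theorem exists_matching_card_eq {s : Finset α} {t : Finset β} {M : Finset (α × β)}
    (hM : M ⊆ s ×ˢ t) (hM₁ : #(M.image Prod.fst) = #M) (hM₂ : #(M.image Prod.snd) = #M)
    {m : ℕ} (hm : #M ≤ m) (hms : m ≤ #s) (hmt : m ≤ #t) :
    ∃ E, M ⊆ E ∧ E ⊆ s ×ˢ t ∧ #E = m ∧ #(E.image Prod.fst) = m ∧ #(E.image Prod.snd) = m := by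
  induction m, hm using Nat.le_induction with
  | base => exact ⟨M, subset_rfl, hM, rfl, hM₁, hM₂⟩
  | succ m _ ih =>
    obtain ⟨E, hME, hE, hcard, hE₁, hE₂⟩ := ih (by omega) (by omega)
    obtain ⟨a, ha, haE⟩ :=
      exists_mem_notMem_of_card_lt_card (s := E.image Prod.fst) (t := s) (by omega)
    obtain ⟨b, hb, hbE⟩ :=
      exists_mem_notMem_of_card_lt_card (s := E.image Prod.snd) (t := t) (by omega)
    have habE : (a, b) ∉ E := fun h => haE (mem_image_of_mem Prod.fst h)
    refine ⟨insert (a, b) E, hME.trans (subset_insert _ _),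
      insert_subset (mem_product.mpr ⟨ha, hb⟩) hE, ?_, ?_, ?_⟩
    · rw [card_insert_of_notMem habE, hcard]
    · rw [image_insert, card_insert_of_notMem haE, hE₁]
    · rw [image_insert, card_insert_of_notMem hbE, hE₂]

end Finset

namespace FinHypergraph

section Walks

variable {V : Type*} {H : FinHypergraph V}

theorem hasWalk_zero {u v : V} : H.HasWalk u v 0 ↔ u = v := by
  constructor
  · rintro ⟨w, -, rfl, rfl, -⟩
    rfl
  · rintro rfl
    exact ⟨fun _ => u, Fin.elim0, rfl, rfl, fun i => i.elim0⟩

theorem hasWalk_succ {u v : V} {n : ℕ} :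
    H.HasWalk u v (n + 1) ↔ ∃ u', H.twoSection.Adj u u' ∧ H.HasWalk u' v n := by
  constructor
  · rintro ⟨w, f, rfl, rfl, hstep⟩
    obtain ⟨he, hne, h₀, h₁⟩ := hstep 0
    refine ⟨w 1, ⟨hne, f 0, he, h₀, h₁⟩, Fin.tail w, Fin.tail f, rfl, ?_, fun i => ?_⟩
    · simp [Fin.tail, Fin.succ_last]
    · simpa [Fin.tail, ← Fin.succ_castSucc] using hstep i.succ
  · rintro ⟨u', ⟨hne, e, he, hu, hu'⟩, w, f, rfl, rfl, hstep⟩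
    refine ⟨Fin.cons u w, Fin.cons e f, rfl, by simp [← Fin.succ_last], fun i => ?_⟩
    refine Fin.cases ⟨he, hne, hu, hu'⟩ (fun j => ?_) i
    simpa [← Fin.succ_castSucc] using hstep j

theorem hasWalk_iff_exists_walk {u v : V} {n : ℕ} :
    H.HasWalk u v n ↔ ∃ p : H.twoSection.Walk u v, p.length = n := by
  induction n generalizing u with
  | zero => simp [hasWalk_zero, SimpleGraph.Walk.length_eq_zero_iff]
  | succ n ih =>
    rw [hasWalk_succ]
    constructor
    · rintro ⟨u', h, hw⟩
      obtain ⟨p, rfl⟩ := ih.mp hw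
      exact ⟨p.cons h, rfl⟩
    · rintro ⟨_ | ⟨h, p⟩, hp⟩
      · simp at hp
      · exact ⟨_, h, ih.mpr ⟨p, by simpa using hp⟩⟩

theorem dist_eq_edist_twoSection (u v : V) : H.dist u v = H.twoSection.edist u v := by
  rw [dist, SimpleGraph.edist_eq_sInf]
  congr 1
  ext d
  simp only [hasWalk_iff_exists_walk, Set.mem_ofPred_eq, Set.mem_range]
  constructor
  · rintro ⟨n, rfl, p, rfl⟩
    exact ⟨p, rfl⟩
  · rintro ⟨p, rfl⟩
    exact ⟨p.length, rfl, p, rfl⟩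

end Walks

section Products

variable {V₁ V₂ : Type*} [DecidableEq V₁] [DecidableEq V₂]
  {H₁ : FinHypergraph V₁} {H₂ : FinHypergraph V₂}

theorem twoSection_minDirProd_adj {x y : V₁} {a b : V₂}
    (h₁ : H₁.twoSection.Adj x y) (h₂ : H₂.twoSection.Adj a b) :
    (H₁.minDirProd H₂).twoSection.Adj (x, a) (y, b) := by
  obtain ⟨hxy, e₁, he₁, hx, hy⟩ := h₁
  obtain ⟨hab, e₂, he₂, ha, hb⟩ := h₂
  have hpair₁ : (({(x, a), (y, b)} : Finset (V₁ × V₂)).image Prod.fst).card = 2 := by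
    simp [Finset.image_insert, Finset.card_pair hxy]
  have hpair₂ : (({(x, a), (y, b)} : Finset (V₁ × V₂)).image Prod.snd).card = 2 := by
    simp [Finset.image_insert, Finset.card_pair hab]
  have hpair : ({(x, a), (y, b)} : Finset (V₁ × V₂)).card = 2 :=
    Finset.card_pair fun h => hxy (congrArg Prod.fst h)
  obtain ⟨E, hsub, hE, hcard, hcard₁, hcard₂⟩ := Finset.exists_matching_card_eq
    (m := min e₁.card e₂.card) (by simp [Finset.insert_subset_iff, *]) (hpair₁.trans hpair.symm)
    (hpair₂.trans hpair.symm)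
    (hpair ▸ le_min (Finset.one_lt_card.mpr ⟨x, hx, y, hy, hxy⟩)
      (Finset.one_lt_card.mpr ⟨a, ha, b, hb, hab⟩))
    (min_le_left _ _) (min_le_right _ _)
  exact ⟨fun h => hxy (congrArg Prod.fst h), E, ⟨e₁, he₁, e₂, he₂, hE, hcard, hcard₁, hcard₂⟩,
    hsub (by simp), hsub (by simp)⟩

theorem twoSection_normalProd :
    (H₁.normalProd H₂).twoSection = H₁.twoSection.strongGraphProd H₂.twoSection := by
  ext ⟨x, a⟩ ⟨y, b⟩
  constructor
  · rintro ⟨hne, E, (⟨z, f, hf, rfl⟩ | ⟨e, he, c, rfl⟩) | ⟨e₁, he₁, e₂, he₂, hE, -⟩, hp, hq⟩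
    · simp only [Finset.mem_product, Finset.mem_singleton] at hp hq
      obtain ⟨⟨rfl, ha⟩, rfl, hb⟩ := And.intro hp hq
      exact ⟨hne, Or.inl ⟨rfl, by rintro rfl; exact hne rfl, f, hf, ha, hb⟩⟩
    · simp only [Finset.mem_product, Finset.mem_singleton] at hp hq
      obtain ⟨⟨hx, rfl⟩, hy, rfl⟩ := And.intro hp hq
      exact ⟨hne, Or.inr (Or.inl ⟨rfl, by rintro rfl; exact hne rfl, e, he, hx, hy⟩)⟩
    · obtain ⟨hx, ha⟩ := Finset.mem_product.mp (hE hp)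
      obtain ⟨hy, hb⟩ := Finset.mem_product.mp (hE hq)
      refine ⟨hne, ?_⟩
      by_cases hxy : x = y
      · subst hxy
        exact Or.inl ⟨rfl, by rintro rfl; exact hne rfl, e₂, he₂, ha, hb⟩
      by_cases hab : a = b
      · subst hab
        exact Or.inr (Or.inl ⟨rfl, hxy, e₁, he₁, hx, hy⟩)
      exact Or.inr (Or.inr ⟨⟨hxy, e₁, he₁, hx, hy⟩, hab, e₂, he₂, ha, hb⟩)
  · rintro ⟨hne, ⟨rfl, -, f, hf, ha, hb⟩ | ⟨rfl, -, e, he, hx, hy⟩ | ⟨h₁, h₂⟩⟩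
    · exact ⟨hne, {x} ×ˢ f, Or.inl (Or.inl ⟨x, f, hf, rfl⟩), by simp [ha], by simp [hb]⟩
    · exact ⟨hne, e ×ˢ {a}, Or.inl (Or.inr ⟨e, he, a, rfl⟩), by simp [hx], by simp [hy]⟩
    · obtain ⟨-, E, hE, hp, hq⟩ := twoSection_minDirProd_adj h₁ h₂
      exact ⟨hne, E, Or.inr hE, hp, hq⟩

end Products

end FinHypergraph

theorem dist_normalProd_general {V₁ V₂ : Type*} [DecidableEq V₁] [DecidableEq V₂]
    (H₁ : FinHypergraph V₁) (H₂ : FinHypergraph V₂) (x y : V₁) (a b : V₂) :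
    (H₁.normalProd H₂).dist (x, a) (y, b) = max (H₁.dist x y) (H₂.dist a b) := by
  simp only [FinHypergraph.dist_eq_edist_twoSection, FinHypergraph.twoSection_normalProd,
    SimpleGraph.edist_strongGraphProd]

/-- distance formula for the normal product. -/
theorem dist_normalProd {V₁ V₂ : Type*} [Fintype V₁] [Nonempty V₁] [DecidableEq V₁]
    [Fintype V₂] [Nonempty V₂] [DecidableEq V₂] (H₁ : FinHypergraph V₁) (H₂ : FinHypergraph V₂)
    (x y : V₁) (a b : V₂) :
    (H₁.normalProd H₂).dist (x, a) (y, b) = max (H₁.dist x y) (H₂.dist a b) :=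
  dist_normalProd_general H₁ H₂ x y a b
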